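/- Let σ = τ_y and let u = δ + αx + γz with δ, α, γ ∈ O_K and ν_D(u) = 0 (note σ(u) = u, so u is a symmetric unit of O_D). Then ν_K(δ² - aα²) = 0 (i.e. δ + αx is a unit of the ring of integers of the field K(x)) and there exists an invertible t ∈ D with u = σ(t)·(δ + αx)·t; that is, ⟨u⟩ ≅ ⟨δ + αx⟩ as hermitian forms over (D, τ_y). -/

import Mathlib

noncomputable section

/-- A surjective discrete valuation `ν : K → ℤ` on a field `K`
(the value of `ν` at `0` is irrelevant: only nonzero elements are constrained). -/
structure DVal (K : Type) [Field K] : Type where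
  ν : K → ℤ
  ν_mul : ∀ x y : K, x ≠ 0 → y ≠ 0 → ν (x * y) = ν x + ν y
  ν_add : ∀ x y : K, x ≠ 0 → y ≠ 0 → x + y ≠ 0 → min (ν x) (ν y) ≤ ν (x + y)
  ν_one : ν 1 = 0
  ν_surj : ∀ n : ℤ, ∃ x : K, x ≠ 0 ∧ ν x = n

namespace DVal

variable {K : Type} [Field K]

/-- `x` belongs to the valuation ring `O_K`. -/
def Int (V : DVal K) (x : K) : Prop := x = 0 ∨ 0 ≤ V.ν x

/-- `x` is a unit of the valuation ring `O_K`. -/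
def IntUnit (V : DVal K) (x : K) : Prop := x ≠ 0 ∧ V.ν x = 0

/-- `x` belongs to the maximal ideal `m_K` of the valuation ring `O_K`. -/
def MaxIdeal (V : DVal K) (x : K) : Prop := x = 0 ∨ 1 ≤ V.ν x

/-- `K` is complete with respect to the valuation `ν`: every Cauchy sequence converges. -/
def IsComplete (V : DVal K) : Prop :=
  ∀ f : ℕ → K,
    (∀ M : ℤ, ∃ N : ℕ, ∀ m n : ℕ, N ≤ m → N ≤ n →
      f m - f n = 0 ∨ M ≤ V.ν (f m - f n)) →
    ∃ L : K, ∀ M : ℤ, ∃ N : ℕ, ∀ n : ℕ, N ≤ n →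
      f n - L = 0 ∨ M ≤ V.ν (f n - L)

/-- The residue field `k = O_K/m_K` has characteristic different from `2`,
i.e. `2` is a unit of the valuation ring `O_K`. -/
def ResCharNeTwo (V : DVal K) : Prop := (2 : K) ≠ 0 ∧ V.ν 2 = 0

end DVal

/-- The reduced norm of a quaternion `u = δ + αx + βy + γz ∈ ℍ[K,a,b]`:
`Nrd u = u·τ(u) = δ² - aα² - bβ² + abγ²`. -/
def qnrd {K : Type} [Field K] (a b : K) (u : QuaternionAlgebra K a 0 b) : K :=
  u.re ^ 2 - a * u.imI ^ 2 - b * u.imJ ^ 2 + a * b * u.imK ^ 2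

/-- The canonical involution `τ(δ + αx + βy + γz) = δ - αx - βy - γz` of `ℍ[K,a,b]`. -/
def qtau {K : Type} [Field K] {a b : K} (u : QuaternionAlgebra K a 0 b) :
    QuaternionAlgebra K a 0 b :=
  ⟨u.re, -u.imI, -u.imJ, -u.imK⟩

/-- The norm form `⟨1,-a,-b,ab⟩` of `ℍ[K,a,b]` is anisotropic over `K`
(equivalently, `ℍ[K,a,b]` is a division ring). -/
def QAniso {K : Type} [Field K] (a b : K) : Prop :=
  ∀ d e f g : K, d ^ 2 - a * e ^ 2 - b * f ^ 2 + a * b * g ^ 2 = 0 →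
    d = 0 ∧ e = 0 ∧ f = 0 ∧ g = 0

/-- The valuation `ν_D(u) = (1/2)·ν_K(Nrd u)` of the quaternion division algebra
`D = ℍ[K,a,b]` (at nonzero `u`). -/
def qnu {K : Type} [Field K] (V : DVal K) (a b : K) (u : QuaternionAlgebra K a 0 b) : ℚ :=
  (V.ν (qnrd a b u) : ℚ) / 2

/-! Write `w = δ + αx`, so `N = δ² - aα² = Nrd w` and `Nrd u = N + aϖγ²`. As `Nrd u` is a unit and
`aϖγ²` lies in the maximal ideal, `N` is a unit. With `m = (γ/N)·x·w̄·y` one has `u = w·(1 + m)`, and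
`m² = -aϖγ²/N` is a central element of the maximal ideal, so two applications of Hensel's lemma
(residue characteristic `≠ 2`) give `p ∈ K` with `t = p + m/(2p)` satisfying `t² = 1 + m`.
Conjugation by `y` acts on `K(x)` as the nontrivial automorphism, which gives `σ(t)·w = w·t`;
hence `u = w·t² = σ(t)·w·t`. -/

open scoped Quaternion

section QuaternionAlgebra

open QuaternionAlgebra

variable {K : Type} [Field K] {a b : K}

lemma mul_qtau_self (u : ℍ[K,a,b]) : u * qtau u = ((qnrd a b u : K) : ℍ[K,a,b]) := by
  ext <;> simp only [qtau, qnrd, re_mul, imI_mul, imJ_mul, imK_mul, re_coe, imI_coe, imJ_coe,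
    imK_coe] <;> ring

lemma qtau_mul_self (u : ℍ[K,a,b]) : qtau u * u = ((qnrd a b u : K) : ℍ[K,a,b]) := by
  ext <;> simp only [qtau, qnrd, re_mul, imI_mul, imJ_mul, imK_mul, re_coe, imI_coe, imJ_coe,
    imK_coe] <;> ring

lemma isUnit_of_qnrd_ne_zero {u : ℍ[K,a,b]} (hu : qnrd a b u ≠ 0) : IsUnit u := by
  have hinv : (((qnrd a b u)⁻¹ : K) : ℍ[K,a,b]) * ((qnrd a b u : K) : ℍ[K,a,b]) = 1 := by
    rw [← coe_mul, inv_mul_cancel₀ hu, coe_one]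
  refine ⟨⟨u, (qnrd a b u)⁻¹ * qtau u, ?_, ?_⟩, rfl⟩
  · rw [← mul_assoc, ← coe_commutes, mul_assoc, mul_qtau_self, hinv]
  · rw [mul_assoc, qtau_mul_self, hinv]

lemma qnrd_ne_zero (haniso : QAniso a b) {u : ℍ[K,a,b]} (hu : u ≠ 0) : qnrd a b u ≠ 0 := by
  intro h
  obtain ⟨h1, h2, h3, h4⟩ := haniso u.re u.imI u.imJ u.imK h
  exact hu (QuaternionAlgebra.ext h1 h2 h3 h4)

lemma qnrd_mk (δ α γ : K) :
    qnrd a b (⟨δ, α, 0, γ⟩ : ℍ[K,a,b]) = (δ ^ 2 - a * α ^ 2) + a * b * γ ^ 2 := by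
  simp [qnrd]

lemma eq_mk_inv_of_mul_eq_one (hb : b ≠ 0) {μ : ℍ[K,a,b]} (hμ : ⟨0, 0, 1, 0⟩ * μ = 1) :
    μ = ⟨0, 0, b⁻¹, 0⟩ := by
  refine (left_inv_eq_right_inv ?_ hμ).symm
  ext <;> simp [hb]

/-- Conjugation by `y` fixes `y` and negates `x`, `z`, and `y`, `z` anticommute with `x`; since
`t - p = r·x·w̄·y` for `w = δ + αx`, `w̄ = δ - αx`, this gives `σ(t)·w = w·t`. -/
lemma mk_conj_qtau_mul_eq (hb : b ≠ 0) (δ α p r : K) :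
    ⟨0, 0, 1, 0⟩ * qtau (⟨p, 0, -(a * α * r), δ * r⟩ : ℍ[K,a,b]) * ⟨0, 0, b⁻¹, 0⟩ * ⟨δ, α, 0, 0⟩ =
      ⟨δ, α, 0, 0⟩ * ⟨p, 0, -(a * α * r), δ * r⟩ := by
  ext <;> simp [qtau] <;> field_simp <;> ring

/-- `t = p + (γ/2pN)·x·w̄·y` squares to `1 + (γ/N)·x·w̄·y`, because `(x·w̄·y)² = -abN` is central
and `p² - abγ²/(4p²N) = 1` by the choice of `p`. -/
lemma mk_mul_self_eq {δ α γ p s : K} (h2 : (2 : K) ≠ 0) (hp : p ≠ 0) (hN : δ ^ 2 - a * α ^ 2 ≠ 0)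
    (hs : s ^ 2 * (δ ^ 2 - a * α ^ 2) = (δ ^ 2 - a * α ^ 2) + a * b * γ ^ 2)
    (hps : 2 * p ^ 2 = 1 + s) :
    let r := γ / (2 * p * (δ ^ 2 - a * α ^ 2))
    (⟨p, 0, -(a * α * r), δ * r⟩ : ℍ[K,a,b]) * ⟨p, 0, -(a * α * r), δ * r⟩ =
      ⟨1, 0, -(a * α * γ / (δ ^ 2 - a * α ^ 2)), δ * γ / (δ ^ 2 - a * α ^ 2)⟩ := by
  intro r
  ext
  all_goals simp only [r, re_mul, imI_mul, imJ_mul, imK_mul]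
  all_goals field_simp
  case re => linear_combination (δ ^ 2 - a * α ^ 2) * hs +
    (δ ^ 2 - a * α ^ 2) ^ 2 * (2 * p ^ 2 - 1 + s) * hps
  all_goals ring

lemma mk_mul_mk_eq {δ α γ : K} (hN : δ ^ 2 - a * α ^ 2 ≠ 0) :
    (⟨δ, α, 0, 0⟩ : ℍ[K,a,b]) *
        ⟨1, 0, -(a * α * γ / (δ ^ 2 - a * α ^ 2)), δ * γ / (δ ^ 2 - a * α ^ 2)⟩ =
      ⟨δ, α, 0, γ⟩ := by
  ext <;> simp <;> field_simp <;> ring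

end QuaternionAlgebra

namespace DVal

variable {K : Type} [Field K] (V : DVal K)

/-- `ν x ≥ M`, reading `ν 0` as `+∞`. -/
def NuGe (M : ℤ) (x : K) : Prop := x = 0 ∨ M ≤ V.ν x

variable {V}

lemma ν_neg_one : V.ν (-1) = 0 := by
  have h := V.ν_mul (-1) (-1) (by norm_num) (by norm_num)
  rw [neg_one_mul, neg_neg, V.ν_one] at h
  omega

lemma ν_neg {x : K} (hx : x ≠ 0) : V.ν (-x) = V.ν x := by
  rw [← neg_one_mul, V.ν_mul _ _ (by norm_num) hx, ν_neg_one, zero_add]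

lemma ν_inv {x : K} (hx : x ≠ 0) : V.ν x⁻¹ = -V.ν x := by
  have h := V.ν_mul x x⁻¹ hx (inv_ne_zero hx)
  rw [mul_inv_cancel₀ hx, V.ν_one] at h
  omega

lemma nuGe_zero (M : ℤ) : V.NuGe M 0 := Or.inl rfl

lemma nuGe_of_ν_eq {M : ℤ} {x : K} (h : V.ν x = M) : V.NuGe M x := Or.inr h.ge

lemma eq_zero_of_forall_nuGe {x : K} (h : ∀ M, V.NuGe M x) : x = 0 :=
  (h (V.ν x + 1)).resolve_right (by omega)

namespace NuGe

variable {M M' : ℤ} {x y : K}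

lemma mono (h : V.NuGe M x) (hM : M' ≤ M) : V.NuGe M' x :=
  h.imp_right fun h' ↦ hM.trans h'

lemma neg (h : V.NuGe M x) : V.NuGe M (-x) := by
  by_cases hx : x = 0
  · simpa [hx] using nuGe_zero _
  · exact Or.inr ((ν_neg hx).symm ▸ h.resolve_left hx)

lemma add (hx : V.NuGe M x) (hy : V.NuGe M y) : V.NuGe M (x + y) := by
  by_cases hx0 : x = 0
  · simpa [hx0] using hy
  by_cases hy0 : y = 0
  · simpa [hy0] using hx
  by_cases hxy : x + y = 0
  · exact Or.inl hxy
  exact Or.inr <| (le_min (hx.resolve_left hx0) (hy.resolve_left hy0)).trans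
    (V.ν_add x y hx0 hy0 hxy)

lemma sub (hx : V.NuGe M x) (hy : V.NuGe M y) : V.NuGe M (x - y) :=
  sub_eq_add_neg x y ▸ hx.add hy.neg

lemma symm (h : V.NuGe M (x - y)) : V.NuGe M (y - x) :=
  neg_sub x y ▸ h.neg

lemma mul (hx : V.NuGe M x) (hy : V.NuGe M' y) : V.NuGe (M + M') (x * y) := by
  by_cases hx0 : x = 0
  · simpa [hx0] using nuGe_zero _
  by_cases hy0 : y = 0
  · simpa [hy0] using nuGe_zero _
  exact Or.inr <| V.ν_mul x y hx0 hy0 ▸ add_le_add (hx.resolve_left hx0) (hy.resolve_left hy0)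

lemma div_two (h2 : V.ResCharNeTwo) (h : V.NuGe M x) : V.NuGe M (x / 2) := by
  simpa [div_eq_mul_inv] using h.mul (nuGe_of_ν_eq (M := 0) (by rw [ν_inv h2.1, h2.2, neg_zero]))

end NuGe

lemma ν_eq_zero_of_ν_add_eq_zero {x y : K} (hx0 : x ≠ 0) (hx : V.NuGe 0 x) (hy : V.NuGe 1 y)
    (hxy0 : x + y ≠ 0) (hxy : V.ν (x + y) = 0) : V.ν x = 0 := by
  have hνx := hx.resolve_left hx0
  by_contra hne
  have := (NuGe.add (Or.inr (by omega)) hy).resolve_left hxy0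
  omega

/-- The iteration `x ↦ x - (x² - c)/2`: its derivative `1 - x` lies in the maximal ideal near `1`,
so it contracts there. -/
def sqrtSeq (c : K) : ℕ → K
  | 0 => 1
  | n + 1 => sqrtSeq c n - (sqrtSeq c n ^ 2 - c) / 2

lemma sqrtSeq_spec {c : K} (h2 : V.ResCharNeTwo) (hc : V.NuGe 1 (c - 1)) (n : ℕ) :
    V.NuGe 1 (sqrtSeq c n - 1) ∧ V.NuGe (n + 1) (sqrtSeq c n ^ 2 - c) := by
  induction n with
  | zero => simpa [sqrtSeq, nuGe_zero] using hc.symm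
  | succ n ih =>
    obtain ⟨hx, he⟩ := ih
    set x := sqrtSeq c n
    have he2 := he.div_two h2
    refine ⟨?_, ?_⟩
    · simpa [sqrtSeq, sub_right_comm] using hx.sub (he2.mono (by omega))
    · have hsq : sqrtSeq c (n + 1) ^ 2 - c
          = (x ^ 2 - c) * -(x - 1) + (x ^ 2 - c) / 2 * ((x ^ 2 - c) / 2) := by
        simp only [sqrtSeq, x]
        field_simp [h2.1]
        ring
      rw [hsq]
      push_cast
      exact (he.mul hx.neg).add ((he2.mul he2).mono (by omega))

lemma sqrtSeq_sub_sqrtSeq {c : K} (h2 : V.ResCharNeTwo) (hc : V.NuGe 1 (c - 1)) {n m : ℕ}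
    (hnm : n ≤ m) :
    V.NuGe (n + 1) (sqrtSeq c m - sqrtSeq c n) := by
  induction m, hnm using Nat.le_induction with
  | base => simpa using nuGe_zero _
  | succ m hnm ih =>
    have hstep : V.NuGe (n + 1) (sqrtSeq c (m + 1) - sqrtSeq c m) := by
      simpa [sqrtSeq] using (((sqrtSeq_spec h2 hc m).2.div_two h2).neg).mono (by omega)
    simpa using hstep.add ih

theorem exists_sq_eq (hcomp : V.IsComplete) (h2 : V.ResCharNeTwo) {c : K}
    (hc : V.NuGe 1 (c - 1)) : ∃ s, s ^ 2 = c ∧ V.NuGe 1 (s - 1) := by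
  have hcauchy : ∀ M : ℤ, ∃ N : ℕ, ∀ m n, N ≤ m → N ≤ n → V.NuGe M (sqrtSeq c m - sqrtSeq c n) := by
    refine fun M ↦ ⟨M.toNat, fun m n hm hn ↦ ?_⟩
    rcases le_total n m with h | h
    · exact (sqrtSeq_sub_sqrtSeq h2 hc h).mono (by omega)
    · exact (sqrtSeq_sub_sqrtSeq h2 hc h).symm.mono (by omega)
  obtain ⟨L, hL⟩ := hcomp _ hcauchy
  have hL1 : V.NuGe 1 (L - 1) := by
    obtain ⟨N, hN⟩ := hL 1
    simpa using (NuGe.symm (hN N le_rfl)).add (sqrtSeq_spec h2 hc N).1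
  refine ⟨L, eq_of_sub_eq_zero (V.eq_zero_of_forall_nuGe fun M ↦ ?_), hL1⟩
  obtain ⟨N, hN⟩ := hL M
  set x := sqrtSeq c (max N M.toNat)
  obtain ⟨hx1, hxc⟩ := sqrtSeq_spec h2 hc (max N M.toNat)
  have hdiff : V.NuGe M (L - x) := NuGe.symm (hN _ (le_max_left _ _))
  have hsum : V.NuGe 0 (L + x) := by
    convert ((hL1.add hx1).mono zero_le_one).add (nuGe_of_ν_eq h2.2) using 1
    ring
  have hsq : L ^ 2 - c = (L - x) * (L + x) + (x ^ 2 - c) := by ring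
  rw [hsq]
  simpa using (hdiff.mul hsum).add (hxc.mono (by omega))

lemma ν_mul_mul_sq {x y z : K} (hx : x ≠ 0) (hy : y ≠ 0) (hz : z ≠ 0) :
    V.ν (x * y * z ^ 2) = V.ν x + V.ν y + 2 * V.ν z := by
  rw [V.ν_mul _ _ (mul_ne_zero hx hy) (pow_ne_zero 2 hz), V.ν_mul _ _ hx hy, sq,
    V.ν_mul _ _ hz hz]
  ring

lemma ne_zero_of_nuGe_one_sub_one {x : K} (h : V.NuGe 1 (x - 1)) : x ≠ 0 := by
  rintro rfl
  have := (h.neg.resolve_left (by norm_num))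
  rw [zero_sub, neg_neg, V.ν_one] at this
  omega

lemma nuGe_one_mul_mul_sq {a ϖ γ : K} (hva : V.ν a = 0) (hvϖ : V.ν ϖ = 1) (hγ : V.Int γ) :
    V.NuGe 1 (a * ϖ * γ ^ 2) := by
  simpa [sq] using ((nuGe_of_ν_eq hva).mul (nuGe_of_ν_eq hvϖ)).mul (NuGe.mul hγ hγ)

lemma intUnit_of_qnu_eq_zero {a ϖ δ α γ : K} (ha0 : a ≠ 0) (hva : V.ν a = 0) (hϖ0 : ϖ ≠ 0)
    (hvϖ : V.ν ϖ = 1) (haniso : QAniso a ϖ) (hδ : V.Int δ) (hα : V.Int α) (hγ : V.Int γ)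
    (hu0 : (⟨δ, α, 0, γ⟩ : ℍ[K,a,ϖ]) ≠ 0) (hval : qnu V a ϖ ⟨δ, α, 0, γ⟩ = 0) :
    V.IntUnit (δ ^ 2 - a * α ^ 2) := by
  have hnrd0 := qnrd_mk (b := ϖ) δ α γ ▸ qnrd_ne_zero haniso hu0
  have hnrd : V.ν (δ ^ 2 - a * α ^ 2 + a * ϖ * γ ^ 2) = 0 := by
    simpa [qnu, qnrd_mk] using hval
  have hN0 : δ ^ 2 - a * α ^ 2 ≠ 0 := by
    intro hN
    obtain ⟨rfl, rfl, -, -⟩ := haniso δ α 0 0 (by linear_combination hN)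
    have hγ0 : γ ≠ 0 := by rintro rfl; exact hu0 rfl
    rw [hN, zero_add, ν_mul_mul_sq ha0 hϖ0 hγ0] at hnrd
    omega
  have hN : V.NuGe 0 (δ ^ 2 - a * α ^ 2) := by
    simpa [sq] using (NuGe.mul hδ hδ).sub ((nuGe_of_ν_eq hva).mul (NuGe.mul hα hα))
  exact ⟨hN0, ν_eq_zero_of_ν_add_eq_zero hN0 hN (nuGe_one_mul_mul_sq hva hvϖ hγ) hnrd0 hnrd⟩

end DVal

open DVal

theorem stmt_7_general (K : Type) [Field K] (V : DVal K)
    -- K is complete with residue field of characteristic ≠ 2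
    (hcomp : V.IsComplete) (hchar : V.ResCharNeTwo)
    -- D = ℍ[K,a,ϖ] with a ∈ O_K^×, ϖ a uniformizer, D a division ring
    (a ϖ : K) (ha0 : a ≠ 0) (hva : V.ν a = 0) (hϖ0 : ϖ ≠ 0) (hvϖ : V.ν ϖ = 1)
    (haniso : QAniso a ϖ)
    -- σ = τ_y (μ = λ⁻¹)
    (mu : QuaternionAlgebra K a 0 ϖ)
    (hmu : (⟨0, 0, 1, 0⟩ : QuaternionAlgebra K a 0 ϖ) * mu = 1)
    (σ : QuaternionAlgebra K a 0 ϖ → QuaternionAlgebra K a 0 ϖ)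
    (hσ : ∀ u, σ u = (⟨0, 0, 1, 0⟩ : QuaternionAlgebra K a 0 ϖ) * qtau u * mu)
    -- u = δ + αx + γz with coordinates in O_K and ν_D(u) = 0
    (δ α γ : K) (hδ : V.Int δ) (hα : V.Int α) (hγ : V.Int γ)
    (hu0 : (⟨δ, α, 0, γ⟩ : QuaternionAlgebra K a 0 ϖ) ≠ 0)
    (hval : qnu V a ϖ (⟨δ, α, 0, γ⟩ : QuaternionAlgebra K a 0 ϖ) = 0) :
    V.IntUnit (δ ^ 2 - a * α ^ 2) ∧ ∃ t : QuaternionAlgebra K a 0 ϖ, IsUnit t ∧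
      (⟨δ, α, 0, γ⟩ : QuaternionAlgebra K a 0 ϖ) =
        σ t * (⟨δ, α, 0, 0⟩ : QuaternionAlgebra K a 0 ϖ) * t := by
  have hN := intUnit_of_qnu_eq_zero ha0 hva hϖ0 hvϖ haniso hδ hα hγ hu0 hval
  refine ⟨hN, ?_⟩
  obtain ⟨hN0, hνN⟩ := hN
  have hT : V.NuGe 1 (1 + a * ϖ * γ ^ 2 / (δ ^ 2 - a * α ^ 2) - 1) := by
    have hN' : V.NuGe 0 (δ ^ 2 - a * α ^ 2)⁻¹ := nuGe_of_ν_eq (by rw [ν_inv hN0, hνN, neg_zero])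
    simpa [div_eq_mul_inv] using (nuGe_one_mul_mul_sq hva hvϖ hγ).mul hN'
  obtain ⟨s, hs, hs1⟩ := exists_sq_eq hcomp hchar hT
  have hs1' : V.NuGe 1 ((1 + s) / 2 - 1) := by
    convert hs1.div_two hchar using 1
    field_simp [hchar.1]
    ring
  obtain ⟨p, hp, hp1⟩ := exists_sq_eq hcomp hchar hs1'
  have hp0 := ne_zero_of_nuGe_one_sub_one hp1
  refine ⟨⟨p, 0, -(a * α * (γ / (2 * p * (δ ^ 2 - a * α ^ 2)))),
    δ * (γ / (2 * p * (δ ^ 2 - a * α ^ 2)))⟩,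
    isUnit_of_qnrd_ne_zero (qnrd_ne_zero haniso fun h ↦ hp0 (congrArg QuaternionAlgebra.re h)), ?_⟩
  rw [hσ, eq_mk_inv_of_mul_eq_one hϖ0 hmu, mk_conj_qtau_mul_eq hϖ0, mul_assoc,
    mk_mul_self_eq hchar.1 hp0 hN0 (by rw [hs]; field_simp) (by rw [hp]; field_simp [hchar.1]),
    mk_mul_mk_eq hN0]

/-- if `u = δ + αx + γz` is a symmetric unit of `O_D` for `σ = τ_y` then
`δ + αx` is a unit of the ring of integers of `K(x)` (i.e. `ν_K(δ² - aα²) = 0`) and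
`⟨u⟩ ≅ ⟨δ + αx⟩` over `(D, τ_y)`. -/
theorem stmt_7 (K : Type) [Field K] (V : DVal K)
    -- K is complete with residue field of characteristic ≠ 2
    (hcomp : V.IsComplete) (hchar : V.ResCharNeTwo)
    -- D = ℍ[K,a,ϖ] with a ∈ O_K^×, ϖ a uniformizer, D a division ring
    (a ϖ : K) (ha0 : a ≠ 0) (hva : V.ν a = 0) (hϖ0 : ϖ ≠ 0) (hvϖ : V.ν ϖ = 1)
    (haniso : QAniso a ϖ)
    -- σ = τ_y (μ = λ⁻¹)
    (mu : QuaternionAlgebra K a 0 ϖ)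
    (hmu : (⟨0, 0, 1, 0⟩ : QuaternionAlgebra K a 0 ϖ) * mu = 1) (hmu' : mu * (⟨0, 0, 1, 0⟩ : QuaternionAlgebra K a 0 ϖ) = 1)
    (σ : QuaternionAlgebra K a 0 ϖ → QuaternionAlgebra K a 0 ϖ)
    (hσ : ∀ u, σ u = (⟨0, 0, 1, 0⟩ : QuaternionAlgebra K a 0 ϖ) * qtau u * mu)
    -- u = δ + αx + γz with coordinates in O_K and ν_D(u) = 0
    (δ α γ : K) (hδ : V.Int δ) (hα : V.Int α) (hγ : V.Int γ)
    (hu0 : (⟨δ, α, 0, γ⟩ : QuaternionAlgebra K a 0 ϖ) ≠ 0)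
    (hval : qnu V a ϖ (⟨δ, α, 0, γ⟩ : QuaternionAlgebra K a 0 ϖ) = 0) :
    V.IntUnit (δ ^ 2 - a * α ^ 2) ∧ ∃ t : QuaternionAlgebra K a 0 ϖ, IsUnit t ∧
      (⟨δ, α, 0, γ⟩ : QuaternionAlgebra K a 0 ϖ) =
        σ t * (⟨δ, α, 0, 0⟩ : QuaternionAlgebra K a 0 ϖ) * t :=
  stmt_7_general K V hcomp hchar a ϖ ha0 hva hϖ0 hvϖ haniso mu hmu σ hσ δ α γ hδ hα hγ hu0 hval
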